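/- arXiv:2505.14500 — 2 statements merged into one kernel-verified Lean document; each statement's English description precedes it below -/
import Mathlib

section
/- For every real x, ∫_{π/3}^{2π/3} sin(u)·F(x,u) du = (1/2)·log((1 + x + x²)/(1 − x + x²)). -/
/-! The integrand is the derivative of `u ↦ log (1 + x² - 2x cos u) / 2`, and the quadratic
`1 + x² - 2xc = (x - c)² + (1 - c²)` stays positive as long as `|c| < 1`, so the integral is a
difference of logarithms; at the endpoints `cos u = ± 1/2`. -/

open Real Set

lemma one_add_sq_sub_two_mul_mul_pos (x : ℝ) {c : ℝ} (hc : |c| < 1) :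
    0 < 1 + x ^ 2 - 2 * x * c := by
  nlinarith [sq_nonneg (x - c), sq_abs c, abs_nonneg c]

lemma abs_cos_lt_one_of_mem_uIcc {u : ℝ} (hu : u ∈ uIcc (π / 3) (2 * π / 3)) :
    |cos u| < 1 := by
  have hpi := pi_pos
  rw [uIcc_of_le (by linarith)] at hu
  have hlo : cos (2 * π / 3) ≤ cos u :=
    cos_le_cos_of_nonneg_of_le_pi (by linarith [hu.1]) (by linarith) hu.2
  have hhi : cos u ≤ cos (π / 3) :=
    cos_le_cos_of_nonneg_of_le_pi (by linarith) (by linarith [hu.2]) hu.1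
  rw [show 2 * π / 3 = π - π / 3 by ring, cos_pi_sub, cos_pi_div_three] at hlo
  rw [cos_pi_div_three] at hhi
  exact abs_lt.2 ⟨by linarith, by linarith⟩

lemma hasDerivAt_half_log_one_add_sq_sub_two_mul_cos (x : ℝ) {u : ℝ}
    (hu : 1 + x ^ 2 - 2 * x * cos u ≠ 0) :
    HasDerivAt (fun v ↦ (1 / 2) * log (1 + x ^ 2 - 2 * x * cos v))
      (sin u * (x / (1 + x ^ 2 - 2 * x * cos u))) u := by
  have hD : HasDerivAt (fun v ↦ 1 + x ^ 2 - 2 * x * cos v) (2 * x * sin u) u := by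
    simpa using ((hasDerivAt_cos u).const_mul (2 * x)).const_sub (1 + x ^ 2)
  refine ((hD.log hu).const_mul (1 / 2 : ℝ)).congr_deriv ?_
  field_simp

lemma integral_sin_mul_div_one_add_sq_sub_two_mul_cos (x : ℝ) {a b : ℝ}
    (h : ∀ u ∈ uIcc a b, 1 + x ^ 2 - 2 * x * cos u ≠ 0) :
    ∫ u in a..b, sin u * (x / (1 + x ^ 2 - 2 * x * cos u))
      = (1 / 2) * log (1 + x ^ 2 - 2 * x * cos b)
        - (1 / 2) * log (1 + x ^ 2 - 2 * x * cos a) := by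
  refine intervalIntegral.integral_eq_sub_of_hasDerivAt
    (fun u hu ↦ hasDerivAt_half_log_one_add_sq_sub_two_mul_cos x (h u hu)) ?_
  refine ContinuousOn.intervalIntegrable ?_
  exact continuous_sin.continuousOn.mul
    (continuousOn_const.div (by fun_prop) h)

theorem integral_sin_F (x : ℝ) :
    ∫ u in (π / 3)..(2 * π / 3),
        Real.sin u * (x / (1 + x ^ 2 - 2 * x * Real.cos u))
      = (1 / 2) * Real.log ((1 + x + x ^ 2) / (1 - x + x ^ 2)) := by
  rw [integral_sin_mul_div_one_add_sq_sub_two_mul_cos x fun u hu ↦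
    (one_add_sq_sub_two_mul_mul_pos x (abs_cos_lt_one_of_mem_uIcc hu)).ne']
  have hplus : 0 < 1 + x + x ^ 2 := by nlinarith [sq_nonneg (x + 1)]
  have hminus : 0 < 1 - x + x ^ 2 := by nlinarith [sq_nonneg (x - 1)]
  rw [show 2 * π / 3 = π - π / 3 by ring, cos_pi_sub, cos_pi_div_three,
    log_div hplus.ne' hminus.ne']
  ring_nf
end

section
/- For every t ∈ [π/3, π/2), Z(1, t) < 0, where Z(x,t) := L(φ)·(G(x,t) + H(x,t)) − (G(φ,t) + H(φ,t))·L(x), φ = (1+√5)/2. -/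
/-!
For `x ≠ 0` and `u = x + x⁻¹`, the sum `G x t + H x t` is a rational function of `u` and
`cos t` alone; at `x = 1` we have `u = 2`, at `x = φ` we have `u = √5`, and `L φ = log φ`.
This makes `Z 1 t` equal to `cos t` times
`(3 - 4c²) / (5 - 4c²)² · √5 log 3 - log φ / (1 - c²)` with `c = cos t`. The rational factor
is at most `1/8` (the difference is a square), and `√5 log 3 < 8 log φ` follows from
`log φ ≥ 1 - φ⁻¹ = (3 - √5)/2` and `log 3 < 1.1`.
-/

open Real

noncomputable def G (x t : ℝ) : ℝ :=
  x * ((x ^ 2 + 1) * Real.cos t - 2 * x) / (x ^ 2 + 1 - 2 * x * Real.cos t) ^ 2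

noncomputable def H (x t : ℝ) : ℝ :=
  x * ((x ^ 2 + 1) * Real.cos t + 2 * x) / (x ^ 2 + 1 + 2 * x * Real.cos t) ^ 2

noncomputable def L (x : ℝ) : ℝ :=
  (1 / 2) * Real.log ((1 + x + x ^ 2) / (1 - x + x ^ 2))

noncomputable def phi : ℝ := (1 + Real.sqrt 5) / 2

noncomputable def Z (x t : ℝ) : ℝ :=
  L phi * (G x t + H x t) - (G phi t + H phi t) * L x

theorem G_add_H_of_sq_add_one_eq {x u t : ℝ} (hx : x ≠ 0) (hu : x ^ 2 + 1 = u * x)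
    (hc : cos t ^ 2 < 1) :
    G x t + H x t = 2 * u * cos t * (u ^ 2 + 4 * cos t ^ 2 - 8) / (u ^ 2 - 4 * cos t ^ 2) ^ 2 := by
  have hu2 : 4 ≤ u ^ 2 := by
    have : 4 * x ^ 2 ≤ u ^ 2 * x ^ 2 := by nlinarith [sq_nonneg (x ^ 2 - 1)]
    nlinarith [sq_pos_of_ne_zero hx]
  have hdiff : u ^ 2 - 4 * cos t ^ 2 ≠ 0 := by nlinarith
  obtain ⟨hm, hp⟩ : u - 2 * cos t ≠ 0 ∧ u + 2 * cos t ≠ 0 :=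
    mul_ne_zero_iff.mp (by convert hdiff using 1; ring)
  have hsub : x ^ 2 + 1 - 2 * x * cos t = x * (u - 2 * cos t) := by rw [hu]; ring
  have hadd : x ^ 2 + 1 + 2 * x * cos t = x * (u + 2 * cos t) := by rw [hu]; ring
  rw [G, H, hsub, hadd, hu, div_add_div _ _ (by positivity) (by positivity),
    div_eq_div_iff (by positivity) (by positivity)]
  ring

theorem G_add_H_one {t : ℝ} (hc : cos t ^ 2 < 1) :
    G 1 t + H 1 t = -(cos t / (1 - cos t ^ 2)) := by
  rw [G_add_H_of_sq_add_one_eq one_ne_zero (u := 2) (by norm_num) hc]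
  have : 1 - cos t ^ 2 ≠ 0 := by linarith
  rw [show (2 : ℝ) ^ 2 - 4 * cos t ^ 2 = 4 * (1 - cos t ^ 2) by ring]
  field_simp
  ring

theorem phi_sq_add_one : phi ^ 2 + 1 = √5 * phi := by
  rw [phi]
  linear_combination (-1 / 4 : ℝ) * sq_sqrt (by norm_num : (0:ℝ) ≤ 5)

theorem G_add_H_phi {t : ℝ} (hc : cos t ^ 2 < 1) :
    G phi t + H phi t = 2 * √5 * cos t * (4 * cos t ^ 2 - 3) / (5 - 4 * cos t ^ 2) ^ 2 := by
  rw [G_add_H_of_sq_add_one_eq (x := phi) goldenRatio_ne_zero phi_sq_add_one hc,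
    sq_sqrt (by norm_num : (0:ℝ) ≤ 5)]
  ring_nf

theorem L_one : L 1 = log 3 / 2 := by
  norm_num [L]
  ring

theorem L_phi : L phi = log phi := by
  have hsq : phi ^ 2 = phi + 1 := goldenRatio_sq
  have h1 : 1 + phi + phi ^ 2 = 2 * phi ^ 2 := by linarith
  have h2 : 1 - phi + phi ^ 2 = 2 := by linarith
  rw [L, h1, h2, mul_div_cancel_left₀ _ two_ne_zero, log_pow]
  ring

theorem Z_one_eq {t : ℝ} (hc : cos t ^ 2 < 1) :
    Z 1 t = cos t * ((3 - 4 * cos t ^ 2) / (5 - 4 * cos t ^ 2) ^ 2 * (√5 * log 3) -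
      log phi / (1 - cos t ^ 2)) := by
  rw [Z, G_add_H_one hc, G_add_H_phi hc, L_one, L_phi]
  ring

theorem three_sub_div_five_sub_sq_le (s : ℝ) : (3 - 4 * s) / (5 - 4 * s) ^ 2 ≤ 1 / 8 := by
  rcases eq_or_ne (5 - 4 * s) 0 with h | h
  · norm_num [h]
  · rw [div_le_div_iff₀ (by positivity) (by norm_num)]
    nlinarith [sq_nonneg (1 - 4 * s)]

theorem three_sub_sqrt_five_div_two_le_log_phi : (3 - √5) / 2 ≤ log phi := by
  have h : 1 - goldenRatio⁻¹ ≤ log phi := one_sub_inv_le_log_of_pos goldenRatio_pos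
  rw [inv_goldenRatio, goldenConj] at h
  linarith

theorem sqrt_five_mul_log_three_lt : √5 * log 3 < 8 * log phi := by
  have hsqrt : √5 < 7 / 3 := (sqrt_lt' (by norm_num)).mpr (by norm_num)
  have hlog3 : log 3 < 1.1 := log_three_lt_d9.trans (by norm_num)
  nlinarith [three_sub_sqrt_five_div_two_le_log_phi, sqrt_nonneg 5]

theorem three_sub_div_five_sub_sq_mul_lt_log_phi_div {s : ℝ} (hs0 : 0 ≤ s) (hs1 : s < 1) :
    (3 - 4 * s) / (5 - 4 * s) ^ 2 * (√5 * log 3) < log phi / (1 - s) := by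
  have hlogphi : 0 ≤ log phi := log_nonneg one_lt_goldenRatio.le
  calc (3 - 4 * s) / (5 - 4 * s) ^ 2 * (√5 * log 3)
      ≤ 1 / 8 * (√5 * log 3) :=
        mul_le_mul_of_nonneg_right (three_sub_div_five_sub_sq_le s) (by positivity)
    _ < log phi := by linarith [sqrt_five_mul_log_three_lt]
    _ ≤ log phi / (1 - s) := le_div_self hlogphi (by linarith) (by linarith)

theorem Z_one_neg (t : ℝ) (ht : t ∈ Set.Ico (π / 3) (π / 2)) : Z 1 t < 0 := by
  obtain ⟨hlo, hhi⟩ := ht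
  have hpos : 0 < cos t := cos_pos_of_mem_Ioo ⟨by linarith [pi_pos], hhi⟩
  have hsin : 0 < sin t := sin_pos_of_pos_of_lt_pi (by linarith [pi_pos]) (by linarith)
  have hc : cos t ^ 2 < 1 := by nlinarith [sin_sq_add_cos_sq t]
  rw [Z_one_eq hc]
  exact mul_neg_of_pos_of_neg hpos
    (sub_neg.mpr (three_sub_div_five_sub_sq_mul_lt_log_phi_div (sq_nonneg _) hc))
end
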